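/- Let g be the doubly warped metric on Ω = I × U determined by a(t) and b(q), i.e. the doubly twisted metric in which a depends only on t and b depends only on q. Define τ by τ_0 = −a(t) b(q), τ_μ = 0, define κ = a'(t)/b(q), and define β by β_0 = 0, β_μ = −(∂_μ b)/b. Then ∇_i τ_j = κ g_{ij} + τ_i β_j on Ω, Σ_{i,j} g^{ij} β_i τ_j = 0, and β is closed, i.e. ∂_i β_j = ∂_j β_i for all i, j. -/

import Mathlib

open scoped BigOperators

/-- Partial derivative of `f : ℝ^m → ℝ` in the `i`-th coordinate direction. -/
noncomputable def pd {m : ℕ} (i : Fin m) (f : (Fin m → ℝ) → ℝ) (x : Fin m → ℝ) : ℝ :=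
  fderiv ℝ f x (Pi.single i 1)

/-- Christoffel symbols `Γ^k_{ij}` of a matrix-valued field `g`. -/
noncomputable def Christoffel {m : ℕ} (g : (Fin m → ℝ) → Matrix (Fin m) (Fin m) ℝ)
    (k i j : Fin m) (x : Fin m → ℝ) : ℝ :=
  (1 / 2) * ∑ l, (g x)⁻¹ k l *
    (pd i (fun y => g y l j) x + pd j (fun y => g y l i) x - pd l (fun y => g y i j) x)

/-- Covariant derivative `∇_i τ_j` of a covector field `τ`. -/
noncomputable def covDeriv {m : ℕ} (g : (Fin m → ℝ) → Matrix (Fin m) (Fin m) ℝ)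
    (τ : (Fin m → ℝ) → Fin m → ℝ) (i j : Fin m) (x : Fin m → ℝ) : ℝ :=
  pd i (fun y => τ y j) x - ∑ k, Christoffel g k i j x * τ x k

/-- `g` is a metric on `Ω`: smooth, symmetric and invertible there. -/
def IsMetricOn {m : ℕ} (g : (Fin m → ℝ) → Matrix (Fin m) (Fin m) ℝ)
    (Ω : Set (Fin m → ℝ)) : Prop :=
  (∀ i j, ContDiffOn ℝ (⊤ : ℕ∞) (fun x => g x i j) Ω) ∧
  (∀ x ∈ Ω, (g x).IsSymm) ∧ (∀ x ∈ Ω, IsUnit (g x).det)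

/-- The doubly twisted metric `ds² = -b² dt² + a² g*_{μν} dq^μ dq^ν` on `ℝ^{1+n}`. -/
noncomputable def dtMetric {n : ℕ} (a b : (Fin (n + 1) → ℝ) → ℝ)
    (gs : (Fin n → ℝ) → Matrix (Fin n) (Fin n) ℝ)
    (x : Fin (n + 1) → ℝ) : Matrix (Fin (n + 1)) (Fin (n + 1)) ℝ :=
  Matrix.of fun i j =>
    Fin.cases (motive := fun _ => ℝ)
      (Fin.cases (motive := fun _ => ℝ) (-(b x) ^ 2) (fun _ => 0) j)
      (fun μ => Fin.cases (motive := fun _ => ℝ) 0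
        (fun ν => (a x) ^ 2 * gs (fun σ => x σ.succ) μ ν) j) i

/-- Covector field with only a time component. -/
noncomputable def covec0 {n : ℕ} (f : (Fin (n + 1) → ℝ) → ℝ)
    (x : Fin (n + 1) → ℝ) : Fin (n + 1) → ℝ :=
  fun i => Fin.cases (motive := fun _ => ℝ) (f x) (fun _ => 0) i

/-- Covector field with only spatial components. -/
noncomputable def covecS {n : ℕ} (v : (Fin (n + 1) → ℝ) → Fin n → ℝ)
    (x : Fin (n + 1) → ℝ) : Fin (n + 1) → ℝ :=
  fun i => Fin.cases (motive := fun _ => ℝ) 0 (fun μ => v x μ) i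

section Entries
variable {n : ℕ} {a b : (Fin (n + 1) → ℝ) → ℝ} {gs : (Fin n → ℝ) → Matrix (Fin n) (Fin n) ℝ}
  {y : Fin (n + 1) → ℝ} {f : (Fin (n + 1) → ℝ) → ℝ} {v : (Fin (n + 1) → ℝ) → Fin n → ℝ}

@[simp] lemma dtM_00 : dtMetric a b gs y 0 0 = -(b y) ^ 2 := rfl
@[simp] lemma dtM_0s (ν : Fin n) : dtMetric a b gs y 0 ν.succ = 0 := rfl
@[simp] lemma dtM_s0 (μ : Fin n) : dtMetric a b gs y μ.succ 0 = 0 := rfl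
@[simp] lemma dtM_ss (μ ν : Fin n) :
    dtMetric a b gs y μ.succ ν.succ = (a y) ^ 2 * gs (fun σ => y σ.succ) μ ν := rfl

@[simp] lemma covec0_zero : covec0 f y 0 = f y := rfl
@[simp] lemma covec0_succ (μ : Fin n) : covec0 f y μ.succ = 0 := rfl
@[simp] lemma covecS_zero : covecS v y 0 = 0 := rfl
@[simp] lemma covecS_succ (μ : Fin n) : covecS v y μ.succ = v y μ := rfl

noncomputable def blk {n : ℕ} (c : ℝ) (A : Matrix (Fin n) (Fin n) ℝ) :
    Matrix (Fin (n + 1)) (Fin (n + 1)) ℝ :=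
  Matrix.of fun i j =>
    Fin.cases (motive := fun _ => ℝ)
      (Fin.cases (motive := fun _ => ℝ) c (fun _ => 0) j)
      (fun μ => Fin.cases (motive := fun _ => ℝ) 0 (fun ν => A μ ν) j) i

variable {c : ℝ} {A : Matrix (Fin n) (Fin n) ℝ}

@[simp] lemma blk_00 : blk c A 0 0 = c := rfl
@[simp] lemma blk_0s (ν : Fin n) : blk c A 0 ν.succ = 0 := rfl
@[simp] lemma blk_s0 (μ : Fin n) : blk c A μ.succ 0 = 0 := rfl
@[simp] lemma blk_ss (μ ν : Fin n) : blk c A μ.succ ν.succ = A μ ν := rfl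

end Entries

lemma blk_inv {n : ℕ} (c : ℝ) (hc : c ≠ 0) (A : Matrix (Fin n) (Fin n) ℝ)
    (hA : IsUnit A.det) : (blk c A)⁻¹ = blk c⁻¹ A⁻¹ := by
  apply Matrix.inv_eq_right_inv
  have hAA : A * A⁻¹ = 1 := Matrix.mul_nonsing_inv _ hA
  ext i j
  rw [Matrix.mul_apply, Fin.sum_univ_succ]
  induction i using Fin.cases with
  | zero =>
    induction j using Fin.cases with
    | zero => simp [Matrix.one_apply, hc]
    | succ ν => simp [Matrix.one_apply, (Fin.succ_ne_zero ν).symm]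
  | succ μ =>
    induction j using Fin.cases with
    | zero => simp [Matrix.one_apply, Fin.succ_ne_zero μ]
    | succ ν =>
      have := congrArg (fun M => M μ ν) hAA
      simp only [Matrix.mul_apply] at this
      simp [this, Matrix.one_apply, Fin.succ_inj]

section Helpers

variable {n : ℕ} {x : Fin (n + 1) → ℝ}

noncomputable def tailCLM (n : ℕ) : (Fin (n + 1) → ℝ) →L[ℝ] (Fin n → ℝ) :=
  ContinuousLinearMap.pi fun σ => ContinuousLinearMap.proj σ.succ

lemma tailCLM_apply (y : Fin (n + 1) → ℝ) : tailCLM n y = fun σ => y σ.succ := rfl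

lemma tail_single_zero : tailCLM n (Pi.single (0 : Fin (n + 1)) 1) = 0 := by
  funext σ
  simp [tailCLM_apply, Pi.single_eq_of_ne (Fin.succ_ne_zero σ)]

lemma tail_single_succ (μ : Fin n) :
    tailCLM n (Pi.single (μ.succ) (1 : ℝ)) = Pi.single μ 1 := by
  funext σ
  by_cases h : σ = μ
  · subst h; simp [tailCLM_apply]
  · simp [tailCLM_apply, Pi.single_eq_of_ne h,
      Pi.single_eq_of_ne (show σ.succ ≠ μ.succ by simpa [Fin.succ_inj] using h)]

lemma pd_comp_tail (f : (Fin n → ℝ) → ℝ) (hf : DifferentiableAt ℝ f (fun σ => x σ.succ))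
    (i : Fin (n + 1)) :
    pd i (fun y => f (fun σ => y σ.succ)) x
      = fderiv ℝ f (fun σ => x σ.succ) (tailCLM n (Pi.single i 1)) := by
  have he : (fun y : Fin (n+1) → ℝ => f (fun σ => y σ.succ)) = f ∘ (tailCLM n) := rfl
  rw [pd, he, fderiv_comp x hf (tailCLM n).differentiableAt,
    (tailCLM n).fderiv, ContinuousLinearMap.comp_apply]
  rfl

lemma pd_zero_comp_tail (f : (Fin n → ℝ) → ℝ) (hf : DifferentiableAt ℝ f (fun σ => x σ.succ)) :
    pd 0 (fun y => f (fun σ => y σ.succ)) x = 0 := by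
  rw [pd_comp_tail f hf 0, tail_single_zero, map_zero]

lemma pd_succ_comp_tail (f : (Fin n → ℝ) → ℝ) (hf : DifferentiableAt ℝ f (fun σ => x σ.succ))
    (μ : Fin n) :
    pd μ.succ (fun y => f (fun σ => y σ.succ)) x = pd μ f (fun σ => x σ.succ) := by
  rw [pd_comp_tail f hf μ.succ, tail_single_succ, pd]

lemma pd_comp_head (f : ℝ → ℝ) (hf : DifferentiableAt ℝ f (x 0)) (i : Fin (n + 1)) :
    pd i (fun y => f (y 0)) x = deriv f (x 0) * (Pi.single i (1:ℝ) : Fin (n+1) → ℝ) 0 := by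
  have he : (fun y : Fin (n+1) → ℝ => f (y 0)) = f ∘ (ContinuousLinearMap.proj (R := ℝ)
    (φ := fun _ : Fin (n+1) => ℝ) 0) := rfl
  rw [pd, he, fderiv_comp x hf (ContinuousLinearMap.differentiableAt _),
    ContinuousLinearMap.fderiv, ContinuousLinearMap.comp_apply]
  have : (ContinuousLinearMap.proj (R := ℝ) (φ := fun _ : Fin (n+1) => ℝ) 0)
      (Pi.single i (1:ℝ)) = (Pi.single i (1:ℝ) : Fin (n+1) → ℝ) 0 := rfl
  have hx0 : (ContinuousLinearMap.proj (R := ℝ) (φ := fun _ : Fin (n+1) => ℝ) 0) x = x 0 := rfl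
  rw [this, hx0]
  have h2 : fderiv ℝ f (x 0) ((Pi.single i (1:ℝ) : Fin (n+1) → ℝ) 0)
      = ((Pi.single i (1:ℝ) : Fin (n+1) → ℝ) 0) • fderiv ℝ f (x 0) 1 := by
    rw [← map_smul]; norm_num
  rw [h2, fderiv_apply_one_eq_deriv]; simp [mul_comm]

lemma pd_zero_comp_head (f : ℝ → ℝ) (hf : DifferentiableAt ℝ f (x 0)) :
    pd 0 (fun y => f (y 0)) x = deriv f (x 0) := by
  rw [pd_comp_head f hf 0]; simp

lemma pd_succ_comp_head (f : ℝ → ℝ) (hf : DifferentiableAt ℝ f (x 0)) (μ : Fin n) :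
    pd μ.succ (fun y => f (y 0)) x = 0 := by
  rw [pd_comp_head f hf μ.succ, Pi.single_eq_of_ne ((Fin.succ_ne_zero μ)).symm]; ring

variable {m : ℕ} {z : Fin m → ℝ}

lemma pd_const (i : Fin m) (c : ℝ) : pd i (fun _ => c) z = 0 := by
  simp [pd]

lemma pd_neg (i : Fin m) (f : (Fin m → ℝ) → ℝ) :
    pd i (fun y => -(f y)) z = -pd i f z := by
  simp [pd, fderiv_neg]

lemma pd_mul (i : Fin m) {f g : (Fin m → ℝ) → ℝ} (hf : DifferentiableAt ℝ f z)
    (hg : DifferentiableAt ℝ g z) :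
    pd i (fun y => f y * g y) z = pd i f z * g z + f z * pd i g z := by
  simp only [pd, fderiv_fun_mul hf hg, ContinuousLinearMap.add_apply,
    ContinuousLinearMap.smul_apply, smul_eq_mul]
  ring

lemma pd_inv (i : Fin m) {f : (Fin m → ℝ) → ℝ} (hf : DifferentiableAt ℝ f z)
    (h0 : f z ≠ 0) :
    pd i (fun y => (f y)⁻¹) z = -pd i f z / f z ^ 2 := by
  have he : (fun y => (f y)⁻¹) = Inv.inv ∘ f := rfl
  rw [pd, he, fderiv_comp z (differentiableAt_inv h0) hf, ContinuousLinearMap.comp_apply,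
    fderiv_inv]
  simp [pd, div_eq_mul_inv]

end Helpers

/-- for a doubly warped metric (scale functions `a(t)`, `b(q)`)
the vector `τ_0 = -a(t)b(q)`, `τ_μ = 0` satisfies `∇_i τ_j = κ g_ij + τ_i β_j`
with `β` orthogonal to `τ` and closed. -/
theorem dwMetric_doubly_torqued
    {n : ℕ} (I : Set ℝ) (hIopen : IsOpen I) (hIconn : I.OrdConnected)
    (U : Set (Fin n → ℝ)) (hUopen : IsOpen U) (hUconn : IsConnected U)
    (Ω : Set (Fin (n + 1) → ℝ))
    (hΩ : Ω = {x | x 0 ∈ I ∧ (fun σ => x σ.succ) ∈ U})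
    (a : ℝ → ℝ) (ha : ContDiffOn ℝ (⊤ : ℕ∞) a I) (hapos : ∀ t ∈ I, 0 < a t)
    (b : (Fin n → ℝ) → ℝ) (hb : ContDiffOn ℝ (⊤ : ℕ∞) b U) (hbpos : ∀ q ∈ U, 0 < b q)
    (gs : (Fin n → ℝ) → Matrix (Fin n) (Fin n) ℝ)
    (hgs : ∀ μ ν, ContDiffOn ℝ (⊤ : ℕ∞) (fun q => gs q μ ν) U)
    (hgsSymm : ∀ q ∈ U, (gs q).IsSymm) (hgsPD : ∀ q ∈ U, (gs q).PosDef)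
    (g : (Fin (n + 1) → ℝ) → Matrix (Fin (n + 1)) (Fin (n + 1)) ℝ)
    (hg : g = dtMetric (fun x => a (x 0)) (fun x => b (fun σ => x σ.succ)) gs)
    (τ : (Fin (n + 1) → ℝ) → Fin (n + 1) → ℝ)
    (hτ : τ = covec0 (fun x => -(a (x 0) * b (fun σ => x σ.succ))))
    (κ : (Fin (n + 1) → ℝ) → ℝ)
    (hκ : κ = fun x => deriv a (x 0) / b (fun σ => x σ.succ))
    (β : (Fin (n + 1) → ℝ) → Fin (n + 1) → ℝ)
    (hβ : β = covecS (fun x μ =>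
      -(pd μ b (fun σ => x σ.succ)) / b (fun σ => x σ.succ))) :
    ∀ x ∈ Ω,
      (∀ i j : Fin (n + 1),
        covDeriv g τ i j x = κ x * g x i j + τ x i * β x j) ∧
      (∑ i, ∑ j, (g x)⁻¹ i j * β x i * τ x j = 0) ∧
      (∀ i j : Fin (n + 1), pd i (fun y => β y j) x = pd j (fun y => β y i) x) := by
  subst hΩ hg hτ hκ hβ
  intro x hx
  obtain ⟨ht, hq⟩ := hx
  set G := dtMetric (fun x : Fin (n+1) → ℝ => a (x 0))
    (fun x => b (fun σ => x σ.succ)) gs with hGdef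
  set T := covec0 (fun x : Fin (n+1) → ℝ =>
    -(a (x 0) * b (fun σ => x σ.succ))) with hTdef
  -- basic facts at the point
  have ha0 : a (x 0) ≠ 0 := (hapos _ ht).ne'
  have hb0 : b (fun σ => x σ.succ) ≠ 0 := (hbpos _ hq).ne'
  have haC : ContDiffAt ℝ (⊤ : ℕ∞) a (x 0) := ha.contDiffAt (hIopen.mem_nhds ht)
  have hbC : ContDiffAt ℝ (⊤ : ℕ∞) b (fun σ => x σ.succ) := hb.contDiffAt (hUopen.mem_nhds hq)
  have haD : DifferentiableAt ℝ a (x 0) := haC.differentiableAt (by simp)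
  have hbD : DifferentiableAt ℝ b (fun σ => x σ.succ) := hbC.differentiableAt (by simp)
  have hA : DifferentiableAt ℝ (fun y : Fin (n+1) → ℝ => a (y 0)) x :=
    haD.comp x ((ContinuousLinearMap.proj (R := ℝ)
      (φ := fun _ : Fin (n+1) => ℝ) 0).differentiableAt)
  have hB : DifferentiableAt ℝ (fun y : Fin (n+1) → ℝ => b (fun σ => y σ.succ)) x :=
    hbD.comp x (tailCLM n).differentiableAt
  have hGSq : ∀ μ ν : Fin n, DifferentiableAt ℝ (fun p => gs p μ ν) (fun σ => x σ.succ) :=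
    fun μ ν => ((hgs μ ν).contDiffAt (hUopen.mem_nhds hq)).differentiableAt (by simp)
  have hA2 : DifferentiableAt ℝ (fun y : Fin (n+1) → ℝ => a (y 0) ^ 2) x := hA.pow 2
  have hBB : DifferentiableAt ℝ (fun p : Fin n → ℝ => -(b p * b p)) (fun σ => x σ.succ) :=
    (hbD.mul hbD).neg
  -- the inverse metric at x
  have hGx : G x = blk (-(b (fun σ => x σ.succ)) ^ 2)
      ((a (x 0)) ^ 2 • gs (fun σ => x σ.succ)) := by
    ext i j
    induction i using Fin.cases with
    | zero =>
      induction j using Fin.cases with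
      | zero => rfl
      | succ ν => rfl
    | succ μ =>
      induction j using Fin.cases with
      | zero => rfl
      | succ ν => simp [hGdef, Matrix.smul_apply, smul_eq_mul]
  have hdet2 : IsUnit ((a (x 0)) ^ 2 • gs (fun σ => x σ.succ)).det := by
    rw [Matrix.det_smul]
    exact (isUnit_iff_ne_zero.2 (pow_ne_zero (Fintype.card (Fin n)) (pow_ne_zero 2 ha0))).mul
      (isUnit_iff_ne_zero.2 (hgsPD _ hq).det_pos.ne')
  have hginv : (G x)⁻¹ = blk (-(b (fun σ => x σ.succ)) ^ 2)⁻¹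
      ((a (x 0)) ^ 2 • gs (fun σ => x σ.succ))⁻¹ := by
    rw [hGx]
    exact blk_inv _ (neg_ne_zero.2 (pow_ne_zero 2 hb0)) _ hdet2
  have hinv00 : (G x)⁻¹ 0 0 = (-(b (fun σ => x σ.succ)) ^ 2)⁻¹ := by rw [hginv]; rfl
  have hinv0s : ∀ ρ : Fin n, (G x)⁻¹ 0 ρ.succ = 0 := by intro ρ; rw [hginv]; rfl
  -- metric component functions
  have e00 : (fun y : Fin (n+1) → ℝ => G y 0 0)
      = (fun y => (fun p => -(b p * b p)) (fun σ => y σ.succ)) := by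
    funext y; show -(b _) ^ 2 = _; ring
  have e0s : ∀ ν : Fin n, (fun y : Fin (n+1) → ℝ => G y 0 ν.succ) = (fun _ => (0:ℝ)) :=
    fun ν => rfl
  have es0 : ∀ μ : Fin n, (fun y : Fin (n+1) → ℝ => G y μ.succ 0) = (fun _ => (0:ℝ)) :=
    fun μ => rfl
  -- derivatives of metric components
  have pd00_0 : pd 0 (fun y => G y 0 0) x = 0 := by
    rw [e00]; exact pd_zero_comp_tail _ hBB
  have pd00_s : ∀ μ : Fin n, pd μ.succ (fun y => G y 0 0) x
      = -(pd μ b (fun σ => x σ.succ) * b (fun σ => x σ.succ)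
          + b (fun σ => x σ.succ) * pd μ b (fun σ => x σ.succ)) := by
    intro μ
    rw [e00, pd_succ_comp_tail _ hBB μ, pd_neg, pd_mul _ hbD hbD]
  have pdss_0 : ∀ μ ν : Fin n, pd 0 (fun y => G y μ.succ ν.succ) x
      = 2 * a (x 0) * deriv a (x 0) * gs (fun σ => x σ.succ) μ ν := by
    intro μ ν
    have e : (fun y : Fin (n+1) → ℝ => G y μ.succ ν.succ)
        = fun y => (fun z : Fin (n+1) → ℝ => a (z 0) ^ 2) y
            * (fun z : Fin (n+1) → ℝ => gs (fun σ => z σ.succ) μ ν) y := rfl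
    rw [e, pd_mul _ hA2 (show DifferentiableAt ℝ
      (fun y : Fin (n+1) → ℝ => gs (fun σ => y σ.succ) μ ν) x from
      (hGSq μ ν).comp (g := fun p => gs p μ ν) x (tailCLM n).differentiableAt)]
    have h1 : pd 0 (fun y : Fin (n+1) → ℝ => a (y 0) ^ 2) x
        = deriv (fun s => a s ^ 2) (x 0) := pd_zero_comp_head (fun s => a s ^ 2) (haD.pow 2)
    have h2 : pd 0 (fun y : Fin (n+1) → ℝ => gs (fun σ => y σ.succ) μ ν) x = 0 :=
      pd_zero_comp_tail _ (hGSq μ ν)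
    rw [h1, h2, (show deriv (fun s => a s ^ 2) (x 0) = ((2:ℕ):ℝ) * a (x 0) ^ (2 - 1) * deriv a (x 0)
      from (haD.hasDerivAt.pow 2).deriv)]
    norm_num
  -- the reduced Christoffel symbol Γ⁰
  have Γred : ∀ i j : Fin (n+1), Christoffel G 0 i j x
      = (1/2) * ((-(b (fun σ => x σ.succ)) ^ 2)⁻¹
        * (pd i (fun y => G y 0 j) x + pd j (fun y => G y 0 i) x
            - pd 0 (fun y => G y i j) x)) := by
    intro i j
    simp only [Christoffel]
    rw [Fin.sum_univ_succ, hinv00,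
      Finset.sum_eq_zero (fun ρ _ => by rw [hinv0s]; ring)]
    ring
  have Γ00 : Christoffel G 0 0 0 x = 0 := by
    rw [Γred 0 0, pd00_0]; ring
  have Γ0s : ∀ ν : Fin n, Christoffel G 0 0 ν.succ x
      = pd ν b (fun σ => x σ.succ) / b (fun σ => x σ.succ) := by
    intro ν
    have z1 : pd 0 (fun y => G y 0 ν.succ) x = 0 := by rw [e0s ν]; exact pd_const _ _
    rw [Γred, z1, pd00_s ν]
    field_simp; ring
  have Γs0 : ∀ μ : Fin n, Christoffel G 0 μ.succ 0 x
      = pd μ b (fun σ => x σ.succ) / b (fun σ => x σ.succ) := by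
    intro μ
    have z1 : pd 0 (fun y => G y 0 μ.succ) x = 0 := by rw [e0s μ]; exact pd_const _ _
    have z2 : pd 0 (fun y => G y μ.succ 0) x = 0 := by rw [es0 μ]; exact pd_const _ _
    rw [Γred, z1, z2, pd00_s μ]
    field_simp; ring
  have Γss : ∀ μ ν : Fin n, Christoffel G 0 μ.succ ν.succ x
      = a (x 0) * deriv a (x 0) * gs (fun σ => x σ.succ) μ ν
          / (b (fun σ => x σ.succ)) ^ 2 := by
    intro μ ν
    have z1 : pd μ.succ (fun y => G y 0 ν.succ) x = 0 := by rw [e0s ν]; exact pd_const _ _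
    have z2 : pd ν.succ (fun y => G y 0 μ.succ) x = 0 := by rw [e0s μ]; exact pd_const _ _
    rw [Γred, z1, z2, pdss_0 μ ν]
    field_simp; ring
  -- derivatives of τ
  have eτ0 : (fun y : Fin (n+1) → ℝ => T y 0)
      = (fun y => -((fun z : Fin (n+1) → ℝ => a (z 0)) y
          * (fun z : Fin (n+1) → ℝ => b (fun σ => z σ.succ)) y)) := rfl
  have eτs : ∀ ν : Fin n, (fun y : Fin (n+1) → ℝ => T y ν.succ) = (fun _ => (0:ℝ)) :=
    fun ν => rfl
  have pdτ0_0 : pd 0 (fun y => T y 0) x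
      = -(deriv a (x 0) * b (fun σ => x σ.succ)) := by
    rw [eτ0, pd_neg, pd_mul _ hA hB, pd_zero_comp_head a haD, pd_zero_comp_tail b hbD]
    ring
  have pdτ0_s : ∀ μ : Fin n, pd μ.succ (fun y => T y 0) x
      = -(a (x 0) * pd μ b (fun σ => x σ.succ)) := by
    intro μ
    rw [eτ0, pd_neg, pd_mul _ hA hB, pd_succ_comp_head a haD μ, pd_succ_comp_tail b hbD μ]
    ring
  have covred : ∀ i j : Fin (n+1), covDeriv G T i j x
      = pd i (fun y => T y j) x
        - Christoffel G 0 i j x * (-(a (x 0) * b (fun σ => x σ.succ))) := by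
    intro i j
    simp only [covDeriv, Fin.sum_univ_succ, hTdef, covec0_succ, covec0_zero,
      mul_zero, Finset.sum_const_zero, add_zero]
  refine ⟨fun i j => ?_, ?_, fun i j => ?_⟩
  · -- claim 1
    induction i using Fin.cases with
    | zero =>
      induction j using Fin.cases with
      | zero =>
        rw [covred, Γ00, pdτ0_0]
        show _ = _ * G x 0 0 + T x 0 * _
        rw [show G x 0 0 = -(b (fun σ => x σ.succ)) ^ 2 from rfl,
          show T x 0 = -(a (x 0) * b (fun σ => x σ.succ)) from rfl,
          show covecS (fun x μ => -(pd μ b (fun σ => x σ.succ)) / b (fun σ => x σ.succ)) x 0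
            = 0 from rfl]
        field_simp; ring
      | succ ν =>
        have z : pd 0 (fun y => T y ν.succ) x = 0 := by rw [eτs ν]; exact pd_const _ _
        rw [covred, Γ0s ν, z]
        show _ = _ * G x 0 ν.succ + T x 0 * _
        rw [show G x 0 ν.succ = 0 from rfl,
          show T x 0 = -(a (x 0) * b (fun σ => x σ.succ)) from rfl,
          show covecS (fun x μ => -(pd μ b (fun σ => x σ.succ)) / b (fun σ => x σ.succ)) x
            ν.succ = -(pd ν b (fun σ => x σ.succ)) / b (fun σ => x σ.succ) from rfl]
        field_simp; ring
    | succ μ =>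
      induction j using Fin.cases with
      | zero =>
        rw [covred, Γs0 μ, pdτ0_s μ]
        show _ = _ * G x μ.succ 0 + T x μ.succ * _
        rw [show G x μ.succ 0 = 0 from rfl, show T x μ.succ = 0 from rfl]
        field_simp
        ring
      | succ ν =>
        have z : pd μ.succ (fun y => T y ν.succ) x = 0 := by rw [eτs ν]; exact pd_const _ _
        rw [covred, Γss μ ν, z]
        show _ = _ * G x μ.succ ν.succ + T x μ.succ * _
        rw [show G x μ.succ ν.succ
            = (a (x 0)) ^ 2 * gs (fun σ => x σ.succ) μ ν from rfl,
          show T x μ.succ = 0 from rfl]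
        field_simp; ring
  · -- claim 2
    rw [hginv]
    simp [Fin.sum_univ_succ, hTdef]
  · -- claim 3
    have hfdD : DifferentiableAt ℝ (fderiv ℝ b) (fun σ => x σ.succ) :=
      (hbC.fderiv_right (m := 1) (WithTop.coe_le_coe.mpr le_top)).differentiableAt one_ne_zero
    have hP : ∀ ν : Fin n, DifferentiableAt ℝ (fun p => pd ν b p) (fun σ => x σ.succ) :=
      fun ν => hfdD.clm_apply (differentiableAt_const _)
    have hPd : ∀ μ ν : Fin n, pd μ (fun p => pd ν b p) (fun σ => x σ.succ)
        = fderiv ℝ (fderiv ℝ b) (fun σ => x σ.succ) (Pi.single μ 1) (Pi.single ν 1) := by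
      intro μ ν
      have e : pd μ (fun p => pd ν b p) (fun σ => x σ.succ)
          = fderiv ℝ (fun p => (fderiv ℝ b p) (Pi.single ν 1)) (fun σ => x σ.succ)
            (Pi.single μ 1) := rfl
      rw [e, fderiv_clm_apply hfdD (differentiableAt_const _)]
      simp
    have hsym : ∀ μ ν : Fin n,
        fderiv ℝ (fderiv ℝ b) (fun σ => x σ.succ) (Pi.single μ 1) (Pi.single ν 1)
          = fderiv ℝ (fderiv ℝ b) (fun σ => x σ.succ) (Pi.single ν 1) (Pi.single μ 1) :=
      fun μ ν => (hbC.isSymmSndFDerivAt (by rw [minSmoothness_of_isRCLikeNormedField]; exact WithTop.coe_le_coe.mpr le_top)) _ _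
    have eβ : ∀ ν : Fin n, (fun y : Fin (n+1) → ℝ =>
          covecS (fun z μ => -(pd μ b (fun σ => z σ.succ)) / b (fun σ => z σ.succ)) y ν.succ)
        = (fun y => (fun p => -(pd ν b p) * (b p)⁻¹) (fun σ => y σ.succ)) := by
      intro ν; funext y
      show -(pd ν b _) / b _ = _
      rw [div_eq_mul_inv]
    have eβ0 : (fun y : Fin (n+1) → ℝ =>
          covecS (fun z μ => -(pd μ b (fun σ => z σ.succ)) / b (fun σ => z σ.succ)) y 0)
        = (fun _ => (0:ℝ)) := rfl
    have hFdiff : ∀ ν : Fin n, DifferentiableAt ℝ (fun p => -(pd ν b p) * (b p)⁻¹)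
        (fun σ => x σ.succ) := fun ν => ((hP ν).neg).mul (hbD.inv hb0)
    have pdβ : ∀ μ ν : Fin n, pd μ.succ (fun y =>
          covecS (fun z ρ => -(pd ρ b (fun σ => z σ.succ)) / b (fun σ => z σ.succ)) y ν.succ) x
        = -(fderiv ℝ (fderiv ℝ b) (fun σ => x σ.succ) (Pi.single μ 1) (Pi.single ν 1))
              * (b (fun σ => x σ.succ))⁻¹
          + -(pd ν b (fun σ => x σ.succ))
              * (-(pd μ b (fun σ => x σ.succ)) / (b (fun σ => x σ.succ)) ^ 2) := by
      intro μ ν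
      rw [eβ ν, pd_succ_comp_tail _ (hFdiff ν) μ, pd_mul (f := fun p => -(pd ν b p)) (g := fun p => (b p)⁻¹) _ ((hP ν).neg) (hbD.inv hb0),
        pd_neg, hPd μ ν, pd_inv _ hbD hb0]
    induction i using Fin.cases with
    | zero =>
      induction j using Fin.cases with
      | zero => rfl
      | succ ν =>
        rw [eβ ν, eβ0, pd_zero_comp_tail _ (hFdiff ν), pd_const]
    | succ μ =>
      induction j using Fin.cases with
      | zero =>
        rw [eβ μ, eβ0, pd_zero_comp_tail _ (hFdiff μ), pd_const]
      | succ ν =>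
        rw [pdβ μ ν, pdβ ν μ, hsym μ ν]
        ring
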